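/- arXiv:2406.18854 — 2 statements merged into one kernel-verified Lean document; each statement's English description precedes it below -/
import Mathlib

section
/- Define J_h^{G}(h_L, h_S) = ((h_L·C−1)/(C−1))² / (C((1−h_L)/(C−1))² + C(1−h_S)²/(C−1) + ((h_L·C−1)/(C−1))²). Then for fixed h_S ∈ [0,1), the function h_L ↦ J_h^{G}(h_L, h_S) on [0,1] is strictly decreasing on [0, 1/C) and nondecreasing on [1/C, 1]. -/
/-- For fixed `h_S ∈ [0,1)`, the map `h_L ↦ J_h^G(h_L, h_S)` is strictly decreasing on
`[0, 1/C)` and nondecreasing on `[1/C, 1]`. -/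
theorem stmt_6 (C : ℕ) (hC : 2 ≤ C) (hS : ℝ) (hhS : hS ∈ Set.Ico (0 : ℝ) 1) :
    StrictAntiOn
      (fun hL : ℝ =>
        ((hL * C - 1) / ((C : ℝ) - 1)) ^ 2 /
          ((C : ℝ) * ((1 - hL) / ((C : ℝ) - 1)) ^ 2 + (C : ℝ) * (1 - hS) ^ 2 / ((C : ℝ) - 1) +
            ((hL * C - 1) / ((C : ℝ) - 1)) ^ 2))
      (Set.Ico (0 : ℝ) (1 / C)) ∧
    MonotoneOn
      (fun hL : ℝ =>
        ((hL * C - 1) / ((C : ℝ) - 1)) ^ 2 /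
          ((C : ℝ) * ((1 - hL) / ((C : ℝ) - 1)) ^ 2 + (C : ℝ) * (1 - hS) ^ 2 / ((C : ℝ) - 1) +
            ((hL * C - 1) / ((C : ℝ) - 1)) ^ 2))
      (Set.Icc (1 / (C : ℝ)) 1) := by
  have hc : (2:ℝ) ≤ (C:ℝ) := by exact_mod_cast hC
  set c := (C : ℝ) with hcdef
  have hc1 : (1:ℝ) < c := by linarith
  have hcm : (0:ℝ) < c - 1 := by linarith
  have hc0 : (0:ℝ) < c := by linarith
  have hSlt : 0 < 1 - hS := by linarith [hhS.2]
  have hS2 : 0 < (1 - hS)^2 := pow_pos hSlt 2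
  have hden : ∀ x : ℝ,
      0 < c * ((1 - x)/(c-1))^2 + c*(1-hS)^2/(c-1) + ((x*c-1)/(c-1))^2 := by
    intro x
    have h1 : 0 ≤ c*((1-x)/(c-1))^2 := by positivity
    have h2 : 0 ≤ ((x*c-1)/(c-1))^2 := sq_nonneg _
    have h3 : 0 < c*(1-hS)^2/(c-1) := div_pos (mul_pos hc0 hS2) hcm
    linarith
  have hden2 : ∀ x : ℝ,
      0 < (x*c-1)^2 + c*(1-x)^2 + c*(c-1)*(1-hS)^2 := by
    intro x
    have h1 : 0 ≤ (x*c-1)^2 := sq_nonneg _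
    have h2 : 0 ≤ c*(1-x)^2 := by positivity
    have h3 : 0 < c*(c-1)*(1-hS)^2 := mul_pos (mul_pos hc0 hcm) hS2
    linarith
  have hrw : ∀ x : ℝ,
      ((x * c - 1) / (c - 1)) ^ 2 /
          (c * ((1 - x) / (c - 1)) ^ 2 + c * (1 - hS) ^ 2 / (c - 1) +
            ((x * c - 1) / (c - 1)) ^ 2)
        = (x*c-1)^2 / ((x*c-1)^2 + c*(1-x)^2 + c*(c-1)*(1-hS)^2) := by
    intro x
    rw [div_eq_div_iff (ne_of_gt (hden x)) (ne_of_gt (hden2 x))]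
    field_simp
    ring
  set K : ℝ := c*(c-1)*(1-hS)^2 with hKdef
  have hK : 0 < K := mul_pos (mul_pos hc0 hcm) hS2
  constructor
  · intro x hx y hy hxy
    simp only
    rw [hrw x, hrw y, div_lt_div_iff₀ (hden2 y) (hden2 x)]
    have hx1 : 0 < 1 - x * c := by
      have := (lt_div_iff₀ hc0).1 hx.2; linarith
    have hy1 : 0 < 1 - y * c := by
      have := (lt_div_iff₀ hc0).1 hy.2; linarith
    have hd : 0 < y - x := sub_pos.2 hxy
    have key : (x*c-1)^2 * ((y*c-1)^2 + c*(1-y)^2 + K)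
        - (y*c-1)^2 * ((x*c-1)^2 + c*(1-x)^2 + K)
        = (y-x)*(c-1)^2*(1-x*c) + (y-x)*(c-1)^2*(1-y*c)
          + 2*(c-1)*((y-x)*(1-x*c)*(1-y*c)) + K*c*((y-x)*(1-x*c))
          + K*c*((y-x)*(1-y*c)) := by ring
    nlinarith [key, mul_pos hd hx1, mul_pos hd hy1,
      mul_pos (mul_pos hd hx1) hy1,
      mul_pos (mul_pos hK hc0) (mul_pos hd hx1),
      mul_pos (mul_pos hK hc0) (mul_pos hd hy1),
      mul_pos (mul_pos (mul_pos hd hx1) hcm) hcm,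
      mul_pos (mul_pos (mul_pos hd hy1) hcm) hcm,
      mul_pos (mul_pos (mul_pos hd hx1) hy1) hcm]
  · intro x hx y hy hxy
    simp only
    rw [hrw x, hrw y, div_le_div_iff₀ (hden2 x) (hden2 y)]
    have hx1 : 0 ≤ x * c - 1 := by
      have := (div_le_iff₀ hc0).1 hx.1; linarith
    have hy1 : 0 ≤ y * c - 1 := by
      have := (div_le_iff₀ hc0).1 hy.1; linarith
    have hx2 : 0 ≤ c - 1 - (x*c-1) := by nlinarith [hx.2]
    have hy2 : 0 ≤ c - 1 - (y*c-1) := by nlinarith [hy.2]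
    have hd : 0 ≤ y - x := sub_nonneg.2 hxy
    have key : (y*c-1)^2 * ((x*c-1)^2 + c*(1-x)^2 + K)
        - (x*c-1)^2 * ((y*c-1)^2 + c*(1-y)^2 + K)
        = (c-1)*((y-x)*(x*c-1)*(c-1-(y*c-1)))
          + (c-1)*((y-x)*(y*c-1)*(c-1-(x*c-1)))
          + K*c*((y-x)*(x*c-1)) + K*c*((y-x)*(y*c-1)) := by ring
    nlinarith [key,
      mul_nonneg hcm.le (mul_nonneg (mul_nonneg hd hx1) hy2),
      mul_nonneg hcm.le (mul_nonneg (mul_nonneg hd hy1) hx2),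
      mul_nonneg (mul_pos hK hc0).le (mul_nonneg hd hx1),
      mul_nonneg (mul_pos hK hc0).le (mul_nonneg hd hy1)]
end

section
/- With D(h_L) and ĥ_F(h_L) as defined, ĥ_F(h_L) ≥ 1 for all h_F-relevant purposes if and only if ((h_L·C−1)/(C−1))·ρ − D(h_L) ≥ 0; equivalently the quadratic inequality −(C((1−h_L)/(C−1))² + C(1−h_S)²/(C−1) + ((h_L·C−1)/(C−1))²) + ((h_L·C−1)/(C−1))·ρ ≥ 0 in h_L has its solution set within [0,1] of the form [h_L^+, 1] for some h_L^+ ∈ (1/C, 1), provided ρ is sufficiently large (ρ > (C+1+C(C−1)(1−h_S)²+ (C−1))/(C−1) suffices). -/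
/-!
Multiplying the inequality by `(C - 1)²` turns it into `g(h_L) ≥ 0` for an explicit quadratic
`g`, whose increments factor as `g y - g x = (y - x) C ((C - 1) ρ + 4 - (x + y)(C + 1))`; for
`ρ > 2` this makes `g` strictly increasing on `(-∞, 1]`. Since `g (1/C) < 0 < g 1` when `ρ` is
large, `g` has a unique zero `h_L⁺ ∈ (1/C, 1)` and the solution set in `[0, 1]` is `[h_L⁺, 1]`.
-/

open Set

section ThresholdSet

variable {α δ : Type*} [ConditionallyCompleteLinearOrder α] [TopologicalSpace α] [OrderTopology α]
  [DenselyOrdered α] [LinearOrder δ] [TopologicalSpace δ] [OrderClosedTopology δ]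

theorem exists_mem_Ioo_sep_le_eq_Icc {f : α → δ} {l a b : α} {t : δ} (hla : l ≤ a) (hab : a ≤ b)
    (hcont : ContinuousOn f (Icc a b)) (hmono : StrictMonoOn f (Icc l b))
    (ha : f a < t) (hb : t < f b) :
    ∃ r ∈ Ioo a b, {x ∈ Icc l b | t ≤ f x} = Icc r b := by
  obtain ⟨r, ⟨har, hrb⟩, hr⟩ := intermediate_value_Icc hab hcont ⟨ha.le, hb.le⟩
  have hr_mem : r ∈ Icc l b := ⟨hla.trans har, hrb⟩
  refine ⟨r, ⟨har.lt_of_ne ?_, hrb.lt_of_ne ?_⟩, ?_⟩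
  · rintro rfl; exact ha.ne hr
  · rintro rfl; exact hb.ne' hr
  ext x
  simp only [mem_Icc]
  constructor
  · rintro ⟨hx, hfx⟩
    exact ⟨(hmono.le_iff_le hr_mem hx).1 (hr ▸ hfx), hx.2⟩
  · rintro ⟨hrx, hxb⟩
    have hx : x ∈ Icc l b := ⟨hla.trans (har.trans hrx), hxb⟩
    exact ⟨hx, hr ▸ (hmono.le_iff_le hr_mem hx).2 hrx⟩

end ThresholdSet

/-- `(c - 1)²` times `((x c - 1)/(c - 1)) ρ - D(x)`, where `D` is built with `h_S = s`. -/
def scaledGap (c s ρ x : ℝ) : ℝ :=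
  (x * c - 1) * (c - 1) * ρ - c * (1 - x) ^ 2 - c * (1 - s) ^ 2 * (c - 1) - (x * c - 1) ^ 2

section ScaledGap

variable {c s ρ : ℝ}

theorem gap_eq_scaledGap_div (hc : c ≠ 1) (x : ℝ) :
    ((x * c - 1) / (c - 1)) * ρ -
        (c * ((1 - x) / (c - 1)) ^ 2 + c * (1 - s) ^ 2 / (c - 1) + ((x * c - 1) / (c - 1)) ^ 2) =
      scaledGap c s ρ x / (c - 1) ^ 2 := by
  have : c - 1 ≠ 0 := sub_ne_zero.2 hc
  unfold scaledGap
  field_simp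
  ring

theorem scaledGap_sub_scaledGap (x y : ℝ) :
    scaledGap c s ρ y - scaledGap c s ρ x = (y - x) * c * ((c - 1) * ρ + 4 - (x + y) * (c + 1)) := by
  unfold scaledGap
  ring

theorem continuous_scaledGap : Continuous (scaledGap c s ρ) := by
  unfold scaledGap
  fun_prop

theorem strictMonoOn_scaledGap (hc : 1 < c) (hρ : 2 < ρ) : StrictMonoOn (scaledGap c s ρ) (Iic 1) := by
  intro x hx y hy hxy
  have hfactor : 0 < (c - 1) * ρ + 4 - (x + y) * (c + 1) := by
    nlinarith [mem_Iic.1 hx, mem_Iic.1 hy]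
  have hxy' : 0 < y - x := sub_pos.2 hxy
  have hincr : 0 < (y - x) * c * ((c - 1) * ρ + 4 - (x + y) * (c + 1)) := by positivity
  linarith [scaledGap_sub_scaledGap (c := c) (s := s) (ρ := ρ) x y]

theorem scaledGap_one_div_neg (hc : 1 < c) : scaledGap c s ρ (1 / c) < 0 := by
  have hc0 : c ≠ 0 := by positivity
  have hroot : 1 / c * c - 1 = 0 := by field_simp; ring
  have hpos : 0 < c * (1 - 1 / c) ^ 2 := by
    have : 1 / c < 1 := (div_lt_one (by positivity)).2 hc
    have : 0 < 1 - 1 / c := sub_pos.2 this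
    positivity
  have : 0 ≤ c * (1 - s) ^ 2 * (c - 1) := by
    have : 0 ≤ c - 1 := sub_nonneg.2 hc.le
    positivity
  unfold scaledGap
  rw [hroot]
  linarith

theorem scaledGap_one_pos (hc : 1 < c) (hρ : c * (1 - s) ^ 2 + (c - 1) < (c - 1) * ρ) :
    0 < scaledGap c s ρ 1 := by
  have hfactor : scaledGap c s ρ 1 = (c - 1) * ((c - 1) * ρ - c * (1 - s) ^ 2 - (c - 1)) := by
    unfold scaledGap
    ring
  rw [hfactor]
  exact mul_pos (sub_pos.2 hc) (by linarith)

end ScaledGap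

theorem stmt_9_general (C : ℕ) (hC : 2 ≤ C) (hS ρ : ℝ)
    (D hatF : ℝ → ℝ)
    (hD : D = fun hL : ℝ => (C : ℝ) * ((1 - hL) / ((C : ℝ) - 1)) ^ 2 +
      (C : ℝ) * (1 - hS) ^ 2 / ((C : ℝ) - 1) + ((hL * C - 1) / ((C : ℝ) - 1)) ^ 2)
    (hhat : hatF = fun hL : ℝ => ((hL * C - 1) / ((C : ℝ) - 1)) * ρ / D hL)
    (hρ : ρ > ((C : ℝ) + 1 + C * ((C : ℝ) - 1) * (1 - hS) ^ 2 + ((C : ℝ) - 1)) / ((C : ℝ) - 1)) :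
    (∀ hL : ℝ, 0 < D hL →
      (1 ≤ hatF hL ↔ 0 ≤ ((hL * C - 1) / ((C : ℝ) - 1)) * ρ - D hL)) ∧
    ∃ hLp ∈ Set.Ioo (1 / (C : ℝ)) 1,
      {x ∈ Set.Icc (0 : ℝ) 1 | 0 ≤ ((x * C - 1) / ((C : ℝ) - 1)) * ρ - D x} =
        Set.Icc hLp 1 := by
  refine ⟨fun hL hDpos => by rw [hhat, one_le_div hDpos, sub_nonneg], ?_⟩
  have hc : (2 : ℝ) ≤ C := by exact_mod_cast hC
  have hc1 : (0 : ℝ) < C - 1 := by linarith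
  have hρ' : 2 * C + C * (C - 1) * (1 - hS) ^ 2 < (C - 1) * ρ := by
    rw [gt_iff_lt, div_lt_iff₀ hc1] at hρ
    linarith
  have hσ : 0 ≤ C * (C - 2) * (1 - hS) ^ 2 := by
    have : (0 : ℝ) ≤ C - 2 := by linarith
    positivity
  have hsep : {x ∈ Icc (0 : ℝ) 1 | 0 ≤ ((x * C - 1) / ((C : ℝ) - 1)) * ρ - D x} =
      {x ∈ Icc (0 : ℝ) 1 | 0 ≤ scaledGap C hS ρ x} := by
    ext x
    simp only [mem_sep_iff, hD, gap_eq_scaledGap_div (by linarith : (C : ℝ) ≠ 1),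
      le_div_iff₀ (by positivity : (0 : ℝ) < ((C : ℝ) - 1) ^ 2), zero_mul]
  rw [hsep]
  exact exists_mem_Ioo_sep_le_eq_Icc (by positivity)
    ((div_le_one (by positivity)).2 (by linarith)) continuous_scaledGap.continuousOn
    ((strictMonoOn_scaledGap (by linarith) (by nlinarith)).mono (Icc_subset_Iic_self))
    (scaledGap_one_div_neg (by linarith)) (scaledGap_one_pos (by linarith) (by nlinarith))

/-- `ĥ_F(h_L) ≥ 1` iff `((h_L C - 1)/(C-1)) ρ - D(h_L) ≥ 0` (given `D > 0`), and for
sufficiently large `ρ` the solution set of this quadratic inequality within `[0,1]` is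
`[h_L⁺, 1]` for some `h_L⁺ ∈ (1/C, 1)`. -/
theorem stmt_9 (C : ℕ) (hC : 2 ≤ C) (hS ρ : ℝ) (hhS : hS ∈ Set.Ico (0 : ℝ) 1) (hρpos : 0 < ρ)
    (D hatF : ℝ → ℝ)
    (hD : D = fun hL : ℝ => (C : ℝ) * ((1 - hL) / ((C : ℝ) - 1)) ^ 2 +
      (C : ℝ) * (1 - hS) ^ 2 / ((C : ℝ) - 1) + ((hL * C - 1) / ((C : ℝ) - 1)) ^ 2)
    (hhat : hatF = fun hL : ℝ => ((hL * C - 1) / ((C : ℝ) - 1)) * ρ / D hL)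
    (hρ : ρ > ((C : ℝ) + 1 + C * ((C : ℝ) - 1) * (1 - hS) ^ 2 + ((C : ℝ) - 1)) / ((C : ℝ) - 1)) :
    (∀ hL : ℝ, 0 < D hL →
      (1 ≤ hatF hL ↔ 0 ≤ ((hL * C - 1) / ((C : ℝ) - 1)) * ρ - D hL)) ∧
    ∃ hLp ∈ Set.Ioo (1 / (C : ℝ)) 1,
      {x ∈ Set.Icc (0 : ℝ) 1 | 0 ≤ ((x * C - 1) / ((C : ℝ) - 1)) * ρ - D x} =
        Set.Icc hLp 1 :=
  stmt_9_general C hC hS ρ D hatF hD hhat hρ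
end
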